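/- arXiv:2107.04679 — 2 statements merged into one kernel-verified Lean document; each statement's English description precedes it below -/
import Mathlib

section
/- Let (N, K_min, v) be a minimal incomplete game with total excess Δ ≥ 0 and let ṽ = (1/n) Σ_{i∈N} v^i be the centre of gravity of the extreme games. Then the average Shapley value satisfies φ_i(ṽ) = v({i}) + Δ/n for every i ∈ N, where φ is the Shapley value. -/
noncomputable section

open Finset

/-- The upper (utopia) vector `b^w` of a cooperative game `w` on `N = {1,…,n}`. -/
def bvec (n : ℕ) (w : Finset (Fin n) → ℝ) (i : Fin n) : ℝ :=
  w Finset.univ - w (Finset.univ \ {i})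

/-- A cooperative game `w` is 1-convex: for every nonempty coalition `S`,
`w S ≤ w N - b^w(N \ S)`, and `b^w(N) ≥ w N`. -/
def OneConvex (n : ℕ) (w : Finset (Fin n) → ℝ) : Prop :=
  (∀ S : Finset (Fin n), S.Nonempty →
      w S ≤ w Finset.univ - ∑ i ∈ Finset.univ \ S, bvec n w i) ∧
  w Finset.univ ≤ ∑ i : Fin n, bvec n w i

/-- The set of 1-convex extensions of an incomplete game `(N, K, v)`:
cooperative games (`w ∅ = 0`) that are 1-convex and agree with `v` on `K`. -/
def Cext (n : ℕ) (K : Finset (Finset (Fin n))) (v : Finset (Fin n) → ℝ) :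
    Set (Finset (Fin n) → ℝ) :=
  {w | w ∅ = 0 ∧ OneConvex n w ∧ ∀ S ∈ K, w S = v S}

/-- `K_min`: the empty coalition, the grand coalition and all singletons. -/
def KminF (n : ℕ) : Finset (Finset (Fin n)) :=
  {∅, Finset.univ} ∪ Finset.univ.image (fun i => ({i} : Finset (Fin n)))

/-- The total excess `Δ = v(N) - ∑_{i ∈ N} v({i})`. -/
def totalExcess (n : ℕ) (v : Finset (Fin n) → ℝ) : ℝ :=
  v Finset.univ - ∑ i : Fin n, v {i}

/-- A minimal incomplete game (only the values on `K_min` are relevant) that is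
1-convex-extendable, i.e. `v ∅ = 0` and `Δ ≥ 0`. -/
def MinExtendable (n : ℕ) (v : Finset (Fin n) → ℝ) : Prop :=
  v ∅ = 0 ∧ 0 ≤ totalExcess n v

/-- The extreme games `v^i` of the set of 1-convex extensions of a minimal
incomplete game. -/
def extGame (n : ℕ) (v : Finset (Fin n) → ℝ) (i : Fin n) (S : Finset (Fin n)) : ℝ :=
  if S ∈ KminF n then v S
  else if i ∈ S then v Finset.univ - ∑ j ∈ Finset.univ \ S, v {j}
  else v Finset.univ - ∑ j ∈ Finset.univ \ S, v {j} - totalExcess n v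

/-- The upper game of the set of 1-convex extensions of a minimal incomplete game. -/
def upperGameMin (n : ℕ) (v : Finset (Fin n) → ℝ) (S : Finset (Fin n)) : ℝ :=
  if S ∈ KminF n then v S else v Finset.univ - ∑ i ∈ Finset.univ \ S, v {i}

/-- The index set `E = 2^N \ ({∅, N} ∪ {{i}} ∪ {N \ {i}})` of extreme rays. -/
def ESetMin (n : ℕ) : Finset (Finset (Fin n)) :=
  Finset.univ \
    (KminF n ∪ Finset.univ.image (fun i => Finset.univ \ ({i} : Finset (Fin n))))

/-- The extreme-ray game `e_T`: value `-1` on `T` and `0` elsewhere. -/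
def eRay (n : ℕ) (T S : Finset (Fin n)) : ℝ := if S = T then -1 else 0

/-- The centre of gravity `ṽ = (1/n) ∑_i v^i` of the extreme games. -/
def tildeV (n : ℕ) (v : Finset (Fin n) → ℝ) (S : Finset (Fin n)) : ℝ :=
  (∑ i : Fin n, extGame n v i S) / (n : ℝ)

/-- The centre of gravity `ẽ = (1/|E|) ∑_{T ∈ E} e_T` of the extreme rays
(minimal incomplete case). -/
def tildeEMin (n : ℕ) (S : Finset (Fin n)) : ℝ :=
  (∑ T ∈ ESetMin n, eRay n T S) / ((ESetMin n).card : ℝ)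

/-- The gap function `g^w(S) = b^w(S) - w(S)`. -/
def gapF (n : ℕ) (w : Finset (Fin n) → ℝ) (S : Finset (Fin n)) : ℝ :=
  (∑ i ∈ S, bvec n w i) - w S

/-- The τ-value of a 1-convex game: `τ_i(w) = b^w_i - g^w(N)/n`. -/
def tauVal (n : ℕ) (w : Finset (Fin n) → ℝ) (i : Fin n) : ℝ :=
  bvec n w i - gapF n w Finset.univ / (n : ℝ)

/-- The Shapley value. -/
def shapley (n : ℕ) (w : Finset (Fin n) → ℝ) (i : Fin n) : ℝ :=
  ∑ S ∈ Finset.univ.filter (fun S : Finset (Fin n) => i ∈ S),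
    ((Nat.factorial (S.card - 1) * Nat.factorial (n - S.card) : ℕ) : ℝ) /
        (Nat.factorial n : ℝ) * (w S - w (S \ {i}))

/-- The concession vector `λ^w_i = min_{S ∋ i} g^w(S)`. -/
def concession (n : ℕ) (w : Finset (Fin n) → ℝ) (i : Fin n) : ℝ :=
  (Finset.univ.filter (fun S : Finset (Fin n) => i ∈ S)).inf'
    ⟨{i}, by simp⟩ (gapF n w)

/-- The minimal right vector `a^w = b^w - λ^w`. -/
def minRight (n : ℕ) (w : Finset (Fin n) → ℝ) (i : Fin n) : ℝ :=
  bvec n w i - concession n w i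

/-- The average value `ζ̃_i(v) = v({i}) + Δ/n` of a minimal incomplete game. -/
def avgValue (n : ℕ) (v : Finset (Fin n) → ℝ) (i : Fin n) : ℝ :=
  v {i} + totalExcess n v / (n : ℝ)

/-- The zero-normalised game of a minimal incomplete game: value `Δ` on the
grand coalition and `0` on all other coalitions. -/
def zeroNorm (n : ℕ) (v : Finset (Fin n) → ℝ) (S : Finset (Fin n)) : ℝ :=
  if S = Finset.univ then totalExcess n v else 0

/-- The upper game `v̄` for incomplete games with defined upper vector. -/
def upperGameK (n : ℕ) (K : Finset (Finset (Fin n))) (v : Finset (Fin n) → ℝ)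
    (S : Finset (Fin n)) : ℝ :=
  if S ∈ K then v S else v Finset.univ - ∑ i ∈ Finset.univ \ S, bvec n v i

/-- The centre of gravity `ẽ = (1/|E|) ∑_{T ∉ K} e_T` of the extreme rays
(defined upper vector case), where `E = 2^N \ K`. -/
def tildeEK (n : ℕ) (K : Finset (Finset (Fin n))) (S : Finset (Fin n)) : ℝ :=
  (∑ T ∈ Finset.univ \ K, eRay n T S) / (((Finset.univ \ K).card : ℝ))

/-!
Off `K_min` the extreme games differ only in whether the excess `Δ` is withheld, so their
average is `ṽ(S) = ∑_{j ∈ S} (v({j}) + Δ/n) - [|S| = 1] Δ/n`. The marginal contribution of `i`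
to `S` under `ṽ` therefore depends only on `|S|`, and for such games the Shapley value is the
plain average of the marginal contributions over the sizes `1, …, n`. The singleton
correction takes `Δ/n` at size `1` and gives it back at size `2`, so only `v({i}) + Δ/n`
survives (for `n = 1`, `Δ = 0`).
-/

open scoped Nat

lemma sum_filter_mem_eq_sum_powerset_erase {α M : Type*} [Fintype α] [DecidableEq α]
    [AddCommMonoid M] (i : α) (f : Finset α → M) :
    ∑ S ∈ univ.filter (fun S : Finset α => i ∈ S), f S =
      ∑ T ∈ (univ.erase i).powerset, f (insert i T) := by
  refine sum_nbij' (fun S => S.erase i) (insert i) ?_ ?_ ?_ ?_ ?_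
  · intro S _
    simpa using erase_subset_erase i (subset_univ S)
  · intro T _
    simp
  · intro S hS
    exact insert_erase (mem_filter.mp hS).2
  · intro T hT
    exact erase_insert fun hiT => by simpa using mem_powerset.mp hT hiT
  · intro S hS
    rw [insert_erase (mem_filter.mp hS).2]

lemma shapley_weight_mul_choose {n k : ℕ} (hk : k < n) :
    ((k ! * (n - 1 - k)! : ℕ) : ℝ) / (n ! : ℝ) * ((n - 1).choose k : ℝ) = 1 / n := by
  obtain ⟨m, rfl⟩ : ∃ m, n = m + 1 := ⟨n - 1, by omega⟩
  have hchoose : ((m.choose k * k ! * (m - k)! : ℕ) : ℝ) = m ! :=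
    congrArg Nat.cast (Nat.choose_mul_factorial_mul_factorial (by omega))
  have hpos : (m.choose k : ℝ) ≠ 0 := by exact_mod_cast (Nat.choose_pos (by omega)).ne'
  push_cast at hchoose ⊢
  rw [Nat.factorial_succ, Nat.cast_mul, ← hchoose]
  push_cast
  field_simp

lemma shapley_eq_of_marginal_eq_card (n : ℕ) (w : Finset (Fin n) → ℝ) (i : Fin n)
    (m : ℕ → ℝ) (hm : ∀ S, i ∈ S → w S - w (S \ {i}) = m S.card) :
    shapley n w i = (∑ k ∈ range n, m (k + 1)) / n := by
  have hcard : (univ.erase i).card = n - 1 := by simp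
  have hsucc : n - 1 + 1 = n := by have := i.pos; omega
  rw [shapley, sum_congr rfl fun S hS => by rw [hm S (mem_filter.mp hS).2],
    sum_filter_mem_eq_sum_powerset_erase i
      (fun S => ((((S.card - 1)! * (n - S.card)! : ℕ) : ℝ) / n ! * m S.card)),
    sum_congr rfl fun T hT => by
      rw [card_insert_of_notMem fun hiT => by simpa using mem_powerset.mp hT hiT],
    sum_powerset_apply_card (fun k => ((((k + 1 - 1)! * (n - (k + 1))! : ℕ) : ℝ) / n ! *
      m (k + 1))), hcard, hsucc, sum_div]
  refine sum_congr rfl fun k hk => ?_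
  have hk : k < n := mem_range.mp hk
  rw [nsmul_eq_mul, Nat.add_sub_cancel, show n - (k + 1) = n - 1 - k by omega,
    ← mul_assoc, mul_comm _ (_ / _), shapley_weight_mul_choose hk]
  ring

lemma mem_KminF_iff {n : ℕ} {S : Finset (Fin n)} :
    S ∈ KminF n ↔ S = ∅ ∨ S = univ ∨ ∃ j, S = {j} := by
  simp [KminF, eq_comm]

lemma totalExcess_one (v : Finset (Fin 1) → ℝ) : totalExcess 1 v = 0 := by
  simp [totalExcess]

lemma sum_extGame_of_mem_KminF {n : ℕ} (v : Finset (Fin n) → ℝ) {S : Finset (Fin n)}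
    (hS : S ∈ KminF n) : ∑ i, extGame n v i S = n * v S := by
  simp [extGame, hS]

lemma sum_extGame_of_notMem_KminF {n : ℕ} (v : Finset (Fin n) → ℝ) {S : Finset (Fin n)}
    (hS : S ∉ KminF n) :
    ∑ i, extGame n v i S = n * (∑ j ∈ S, v {j}) + S.card * totalExcess n v := by
  have hupper : v univ - ∑ j ∈ univ \ S, v {j} = ∑ j ∈ S, v {j} + totalExcess n v := by
    rw [totalExcess, ← sum_sdiff (subset_univ S)]
    ring
  have hcard : ((univ \ S).card : ℝ) = n - S.card := by
    rw [card_sdiff_of_subset (subset_univ S), card_univ, Fintype.card_fin,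
      Nat.cast_sub (card_le_univ S |>.trans_eq (Fintype.card_fin n))]
  simp only [extGame, if_neg hS, hupper]
  rw [← sum_sdiff (subset_univ S), sum_congr rfl fun i hi => if_neg (mem_sdiff.mp hi).2,
    sum_congr rfl fun i hi => if_pos hi, sum_const, sum_const, nsmul_eq_mul, nsmul_eq_mul,
    hcard]
  ring

lemma tildeV_eq {n : ℕ} (hn : 0 < n) {v : Finset (Fin n) → ℝ} (hv : v ∅ = 0)
    (S : Finset (Fin n)) :
    tildeV n v S =
      ∑ j ∈ S, v {j} + totalExcess n v / n * (S.card - if S.card = 1 then 1 else 0) := by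
  have hn' : (n : ℝ) ≠ 0 := by positivity
  by_cases hS : S ∈ KminF n
  · rw [tildeV, sum_extGame_of_mem_KminF v hS, mul_div_cancel_left₀ _ hn']
    rcases mem_KminF_iff.mp hS with rfl | rfl | ⟨j, rfl⟩
    · simp [hv]
    · obtain rfl | hn1 := eq_or_ne n 1
      · simp [totalExcess_one, univ_unique]
      · rw [card_univ, Fintype.card_fin, if_neg hn1, totalExcess]
        field_simp
        ring
    · simp
  · have hcard : S.card ≠ 1 := fun h =>
      hS (mem_KminF_iff.mpr (Or.inr (Or.inr (card_eq_one.mp h))))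
    rw [tildeV, sum_extGame_of_notMem_KminF v hS, if_neg hcard]
    field_simp
    ring

lemma tildeV_sub_tildeV_sdiff {n : ℕ} (hn : 0 < n) {v : Finset (Fin n) → ℝ} (hv : v ∅ = 0)
    {i : Fin n} {S : Finset (Fin n)} (hi : i ∈ S) :
    tildeV n v S - tildeV n v (S \ {i}) =
      v {i} + totalExcess n v / n * (1 - (if S.card = 1 then 1 else 0) +
        if S.card = 2 then 1 else 0) := by
  have hcard : (S \ {i}).card = S.card - 1 := by
    rw [← erase_eq, card_erase_of_mem hi]
  have hsum : ∑ j ∈ S \ {i}, v {j} = ∑ j ∈ S, v {j} - v {i} := by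
    rw [← erase_eq, sum_erase_eq_sub hi]
  have hpos : 0 < S.card := card_pos.mpr ⟨i, hi⟩
  rw [tildeV_eq hn hv, tildeV_eq hn hv, hsum, hcard, Nat.cast_sub hpos]
  obtain h1 | h2 | h3 : S.card = 1 ∨ S.card = 2 ∨ 2 < S.card := by omega
  · simp [h1]
  · simp [h2]
    ring
  · rw [if_neg (by omega), if_neg (by omega), if_neg (by omega)]
    ring

theorem stmt_8_general (n : ℕ) (v : Finset (Fin n) → ℝ) (hv : v ∅ = 0) :
    ∀ i : Fin n, shapley n (tildeV n v) i = v {i} + totalExcess n v / (n : ℝ) := by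
  intro i
  have hn : 0 < n := i.pos
  have key := shapley_eq_of_marginal_eq_card n (tildeV n v) i
    (fun s => v {i} + totalExcess n v / n * (1 - (if s = 1 then 1 else 0) +
      if s = 2 then 1 else 0))
    fun S hi => tildeV_sub_tildeV_sdiff hn hv hi
  rw [key]
  obtain rfl | ⟨m, rfl⟩ : n = 1 ∨ ∃ m, n = m + 2 := by
    rcases n with _ | _ | m
    · omega
    · exact .inl rfl
    · exact .inr ⟨m, rfl⟩
  · simp [totalExcess_one]
  · simp only [sum_range_succ', Nat.cast_add, Nat.cast_ofNat, Nat.add_eq_right,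
      Nat.reduceEqDiff, Nat.add_eq_zero_iff, one_ne_zero, and_false, ↓reduceIte, sum_const,
      card_range, nsmul_eq_mul]
    field_simp
    ring

/-- the average Shapley value of a minimal incomplete game with
`Δ ≥ 0` satisfies `φ_i(ṽ) = v({i}) + Δ/n`. -/
theorem stmt_8 (n : ℕ) (hn : 0 < n) (v : Finset (Fin n) → ℝ) (hv : v ∅ = 0)
    (hΔ : 0 ≤ totalExcess n v) :
    ∀ i : Fin n, shapley n (tildeV n v) i = v {i} + totalExcess n v / (n : ℝ) :=
  stmt_8_general n v hv
end
end

section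
/- The average value ζ̃, defined on 1-convex-extendable minimal incomplete games by ζ̃_i(v) = v({i}) + Δ/n, is the unique function f from the class of 1-convex-extendable minimal incomplete games on N to ℝ^n satisfying, for all such games v, w: (1) efficiency: Σ_{i∈N} f_i(v) = v(N); (2) symmetry of ṽ: for all i, j ∈ N and all S ⊆ N∖{i,j}, ṽ(S∪{i}) = ṽ(S∪{j}) implies f_i(v) = f_j(v); (3) null player of ṽ: for i ∈ N, if ṽ(S) = ṽ(S∪{i}) for all S ⊆ N∖{i}, then f_i(v) = 0; (4) additivity: f(v + w) = f(v) + f(w), where v + w is the minimal incomplete game with pointwise-summed values. -/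
noncomputable section

open Finset

/-- The axioms of Theorem `thm:axiom-known-shapley`: efficiency, symmetry of
`ṽ`, null player of `ṽ`, and additivity. -/
def ShapleyAxioms (n : ℕ) (f : (Finset (Fin n) → ℝ) → Fin n → ℝ) : Prop :=
  (∀ v, MinExtendable n v → ∑ i : Fin n, f v i = v Finset.univ) ∧
  (∀ v, MinExtendable n v → ∀ i j : Fin n, ∀ S : Finset (Fin n),
    S ⊆ Finset.univ \ {i, j} →
    tildeV n v (insert i S) = tildeV n v (insert j S) → f v i = f v j) ∧
  (∀ v, MinExtendable n v → ∀ i : Fin n,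
    (∀ S : Finset (Fin n), S ⊆ Finset.univ \ {i} →
      tildeV n v S = tildeV n v (insert i S)) → f v i = 0) ∧
  (∀ v w, MinExtendable n v → MinExtendable n w → f (v + w) = f v + f w)


/-!
Outside the singletons the centre of gravity is the additive game of the average value:
`ṽ(S) = ∑_{k ∈ S} ζ̃_k(v)` whenever `|S| ≠ 1`, while `ṽ({i}) = v({i})`. From this, `ζ̃` satisfies
the four axioms. Conversely, split `v` into the dictator games `S ↦ v({j}) [j ∈ S]` and a remainder
`w` vanishing on singletons. A dictator game is additive, hence its own `ṽ`, so the null player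
axiom and efficiency pin down `f` on it; on `w` all singletons of `ṽ` agree, so symmetry and
efficiency give `f_i(w) = w(N)/n = Δ/n`. Additivity then forces `f = ζ̃`.
-/

section

variable {n : ℕ}

lemma mem_KminF {S : Finset (Fin n)} :
    S ∈ KminF n ↔ S = ∅ ∨ S = univ ∨ ∃ i, S = {i} := by
  simp [KminF, eq_comm]

lemma univ_mem_KminF : (univ : Finset (Fin n)) ∈ KminF n :=
  mem_KminF.2 (Or.inr (Or.inl rfl))

lemma tildeV_of_mem_KminF (hn : 0 < n) (v : Finset (Fin n) → ℝ) {S : Finset (Fin n)}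
    (hS : S ∈ KminF n) : tildeV n v S = v S := by
  have : (n : ℝ) ≠ 0 := by positivity
  simp only [tildeV, extGame, hS, if_true, sum_const, card_univ, Fintype.card_fin, nsmul_eq_mul]
  field_simp

lemma tildeV_singleton (hn : 0 < n) (v : Finset (Fin n) → ℝ) (i : Fin n) :
    tildeV n v {i} = v {i} :=
  tildeV_of_mem_KminF hn v (mem_KminF.2 (Or.inr (Or.inr ⟨i, rfl⟩)))

lemma sum_avgValue (hn : 0 < n) (v : Finset (Fin n) → ℝ) :
    ∑ i, avgValue n v i = v univ := by
  have : (n : ℝ) ≠ 0 := by positivity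
  simp only [avgValue, totalExcess, sum_add_distrib, sum_const, card_univ, Fintype.card_fin,
    nsmul_eq_mul]
  field_simp
  ring

lemma extGame_of_notMem_KminF (v : Finset (Fin n) → ℝ) (i : Fin n) {S : Finset (Fin n)}
    (hS : S ∉ KminF n) :
    extGame n v i S = ∑ k ∈ S, v {k} + if i ∈ S then totalExcess n v else 0 := by
  have hsplit := sum_sdiff (f := fun k => v {k}) (subset_univ S)
  simp only [extGame, hS, if_false, totalExcess] at hsplit ⊢
  split_ifs <;> linarith

lemma tildeV_of_notMem_KminF (hn : 0 < n) (v : Finset (Fin n) → ℝ) {S : Finset (Fin n)}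
    (hS : S ∉ KminF n) : tildeV n v S = ∑ k ∈ S, avgValue n v k := by
  have : (n : ℝ) ≠ 0 := by positivity
  simp only [tildeV, extGame_of_notMem_KminF v _ hS, avgValue, sum_add_distrib, sum_const,
    card_univ, Fintype.card_fin, nsmul_eq_mul, sum_ite_mem, univ_inter]
  field_simp

lemma tildeV_eq_sum_avgValue (hn : 0 < n) {v : Finset (Fin n) → ℝ} (hv : v ∅ = 0)
    {S : Finset (Fin n)} (hS : S.card ≠ 1) : tildeV n v S = ∑ k ∈ S, avgValue n v k := by
  by_cases hK : S ∈ KminF n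
  · rw [tildeV_of_mem_KminF hn v hK]
    rcases mem_KminF.1 hK with rfl | rfl | ⟨i, rfl⟩
    · simp [hv]
    · exact (sum_avgValue hn v).symm
    · simp at hS
  · exact tildeV_of_notMem_KminF hn v hK

lemma avgValue_eq_of_tildeV_insert_eq (hn : 0 < n) {v : Finset (Fin n) → ℝ} (hv : v ∅ = 0)
    {i j : Fin n} {S : Finset (Fin n)} (hS : S ⊆ univ \ {i, j})
    (h : tildeV n v (insert i S) = tildeV n v (insert j S)) :
    avgValue n v i = avgValue n v j := by
  have hiS : i ∉ S := fun hi => by simpa using hS hi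
  have hjS : j ∉ S := fun hj => by simpa using hS hj
  rcases S.eq_empty_or_nonempty with rfl | hSne
  · rw [insert_empty, insert_empty, tildeV_singleton hn, tildeV_singleton hn] at h
    simp [avgValue, h]
  · have hcard : ∀ k ∉ S, (insert k S).card ≠ 1 := fun k hk => by
      rw [card_insert_of_notMem hk]
      have := hSne.card_pos
      omega
    rw [tildeV_eq_sum_avgValue hn hv (hcard i hiS), tildeV_eq_sum_avgValue hn hv (hcard j hjS),
      sum_insert hiS, sum_insert hjS] at h
    linarith

lemma avgValue_eq_zero_of_null (hn : 0 < n) {v : Finset (Fin n) → ℝ} (hv : v ∅ = 0) {i : Fin n}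
    (hnull : ∀ S ⊆ univ \ {i}, tildeV n v S = tildeV n v (insert i S)) :
    avgValue n v i = 0 := by
  have hvi : v {i} = 0 := by
    have h := hnull ∅ (empty_subset _)
    rw [tildeV_eq_sum_avgValue hn hv (by simp), sum_empty, insert_empty, tildeV_singleton hn] at h
    exact h.symm
  have hsplit : v univ = avgValue n v i + ∑ k ∈ univ \ {i}, avgValue n v k := by
    rw [← sum_avgValue hn v, sum_eq_add_sum_sdiff_singleton_of_mem (mem_univ i)]
  have h := hnull (univ \ {i}) subset_rfl
  rw [show insert i (univ \ {i}) = univ by simp, tildeV_of_mem_KminF hn v univ_mem_KminF] at h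
  by_cases hcard : (univ \ {i}).card = 1
  · obtain ⟨j, hj⟩ := card_eq_one.1 hcard
    rw [hj, tildeV_singleton hn] at h
    rw [hj, sum_singleton] at hsplit
    simp only [avgValue, hvi] at hsplit h ⊢
    linarith
  · rw [tildeV_eq_sum_avgValue hn hv hcard] at h
    linarith

lemma avgValue_add (v w : Finset (Fin n) → ℝ) :
    avgValue n (v + w) = avgValue n v + avgValue n w := by
  funext i
  simp only [avgValue, totalExcess, Pi.add_apply, sum_add_distrib]
  ring

theorem shapleyAxioms_avgValue (hn : 0 < n) : ShapleyAxioms n (avgValue n) :=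
  ⟨fun v _ => sum_avgValue hn v,
    fun _ hv _ _ _ hS h => avgValue_eq_of_tildeV_insert_eq hn hv.1 hS h,
    fun _ hv _ hnull => avgValue_eq_zero_of_null hn hv.1 hnull,
    fun v w _ _ => avgValue_add v w⟩

lemma MinExtendable.zero : MinExtendable n 0 :=
  ⟨rfl, by simp [totalExcess]⟩

lemma MinExtendable.add {v w : Finset (Fin n) → ℝ} (hv : MinExtendable n v)
    (hw : MinExtendable n w) : MinExtendable n (v + w) := by
  refine ⟨by simp [hv.1, hw.1], ?_⟩
  have := add_nonneg hv.2 hw.2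
  simp only [totalExcess, Pi.add_apply, sum_add_distrib] at this ⊢
  linarith

lemma MinExtendable.sum {ι : Type*} {s : Finset ι} {v : ι → Finset (Fin n) → ℝ}
    (hv : ∀ j ∈ s, MinExtendable n (v j)) : MinExtendable n (∑ j ∈ s, v j) := by
  classical
  induction s using Finset.induction_on with
  | empty => simpa using MinExtendable.zero
  | insert j s hj ih =>
    rw [sum_insert hj]
    exact (hv j (mem_insert_self j s)).add (ih fun k hk => hv k (mem_insert_of_mem hk))

lemma minExtendable_of_additive {v : Finset (Fin n) → ℝ} (hv : ∀ S, v S = ∑ k ∈ S, v {k}) :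
    MinExtendable n v :=
  ⟨by simpa using hv ∅, by simp [totalExcess, ← hv univ]⟩

lemma tildeV_of_additive (hn : 0 < n) {v : Finset (Fin n) → ℝ}
    (hv : ∀ S, v S = ∑ k ∈ S, v {k}) : tildeV n v = v := by
  have hΔ : totalExcess n v = 0 := by simp [totalExcess, ← hv univ]
  funext S
  by_cases hS : S.card = 1
  · obtain ⟨i, rfl⟩ := card_eq_one.1 hS
    exact tildeV_singleton hn v i
  · rw [tildeV_eq_sum_avgValue hn (by simpa using hv ∅) hS, hv S]
    simp [avgValue, hΔ]

def dictatorGame (n : ℕ) (j : Fin n) (c : ℝ) (S : Finset (Fin n)) : ℝ :=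
  if j ∈ S then c else 0

lemma dictatorGame_eq_sum_singleton (j : Fin n) (c : ℝ) (S : Finset (Fin n)) :
    dictatorGame n j c S = ∑ k ∈ S, dictatorGame n j c {k} := by
  simp [dictatorGame]

namespace ShapleyAxioms

variable {f : (Finset (Fin n) → ℝ) → Fin n → ℝ}

lemma map_zero (hf : ShapleyAxioms n f) : f 0 = 0 := by
  have h := hf.2.2.2 0 0 MinExtendable.zero MinExtendable.zero
  rwa [add_zero, left_eq_add] at h

lemma map_sum (hf : ShapleyAxioms n f) {ι : Type*} {s : Finset ι} {v : ι → Finset (Fin n) → ℝ}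
    (hv : ∀ j ∈ s, MinExtendable n (v j)) : f (∑ j ∈ s, v j) = ∑ j ∈ s, f (v j) := by
  classical
  induction s using Finset.induction_on with
  | empty => simpa using hf.map_zero
  | insert j s hj ih =>
    have hs : ∀ k ∈ s, MinExtendable n (v k) := fun k hk => hv k (mem_insert_of_mem hk)
    rw [sum_insert hj, sum_insert hj, hf.2.2.2 _ _ (hv j (mem_insert_self j s))
      (MinExtendable.sum hs), ih hs]

lemma apply_dictatorGame (hf : ShapleyAxioms n f) (hn : 0 < n) (j : Fin n) (c : ℝ) (k : Fin n) :
    f (dictatorGame n j c) k = if k = j then c else 0 := by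
  have hmin := minExtendable_of_additive (dictatorGame_eq_sum_singleton j c)
  have hnull : ∀ k ≠ j, f (dictatorGame n j c) k = 0 := fun k hkj =>
    hf.2.2.1 _ hmin k fun S _ => by
      rw [tildeV_of_additive hn (dictatorGame_eq_sum_singleton j c)]
      simp [dictatorGame, Ne.symm hkj]
  split_ifs with hkj
  · have heff := hf.1 _ hmin
    rw [sum_eq_single j (fun k _ => hnull k) (by simp)] at heff
    simpa [hkj, dictatorGame] using heff
  · exact hnull k hkj

lemma apply_of_singleton_eq (hf : ShapleyAxioms n f) (hn : 0 < n) {v : Finset (Fin n) → ℝ}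
    (hv : MinExtendable n v) (hsing : ∀ k l, v {k} = v {l}) (i : Fin n) :
    f v i = v univ / n := by
  have hsym : ∀ k, f v k = f v i := fun k =>
    hf.2.1 v hv k i ∅ (empty_subset _) (by
      rw [insert_empty, insert_empty, tildeV_singleton hn, tildeV_singleton hn, hsing])
  have heff := hf.1 v hv
  rw [sum_congr rfl fun k _ => hsym k, sum_const, card_univ, Fintype.card_fin, nsmul_eq_mul]
    at heff
  rw [← heff]
  field_simp

theorem eq_avgValue (hf : ShapleyAxioms n f) (hn : 0 < n) {v : Finset (Fin n) → ℝ}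
    (hv : MinExtendable n v) (i : Fin n) : f v i = avgValue n v i := by
  set a := ∑ j, dictatorGame n j (v {j})
  have ha : ∀ S, a S = ∑ k ∈ S, v {k} := fun S => by
    simp [a, dictatorGame, Finset.sum_apply]
  have haM : MinExtendable n a :=
    MinExtendable.sum fun j _ => minExtendable_of_additive (dictatorGame_eq_sum_singleton j _)
  have hw_sing : ∀ k, (v - a) {k} = 0 := fun k => by simp [ha]
  have hwM : MinExtendable n (v - a) :=
    ⟨by simp [ha, hv.1], by simpa [totalExcess, hw_sing, ha] using hv.2⟩
  calc f v i = f (a + (v - a)) i := by rw [add_sub_cancel]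
    _ = v {i} + (v - a) univ / n := by
      rw [hf.2.2.2 a _ haM hwM, Pi.add_apply, hf.map_sum fun j _ =>
        minExtendable_of_additive (dictatorGame_eq_sum_singleton j _), Finset.sum_apply]
      simp only [hf.apply_dictatorGame hn, Finset.sum_ite_eq, mem_univ, if_true,
        hf.apply_of_singleton_eq hn hwM (fun k l => by rw [hw_sing, hw_sing])]
    _ = avgValue n v i := by simp [avgValue, totalExcess, ha]

end ShapleyAxioms

end

/-- the average value `ζ̃_i(v) = v({i}) + Δ/n` is the unique value
on 1-convex-extendable minimal incomplete games satisfying efficiency, symmetry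
of `ṽ`, null player of `ṽ` and additivity. -/
theorem stmt_10 (n : ℕ) (hn : 0 < n) :
    ShapleyAxioms n (avgValue n) ∧
    ∀ f : (Finset (Fin n) → ℝ) → Fin n → ℝ, ShapleyAxioms n f →
      ∀ v, MinExtendable n v → ∀ i : Fin n, f v i = avgValue n v i :=
  ⟨shapleyAxioms_avgValue hn, fun _ hf _ hv i => hf.eq_avgValue hn hv i⟩
end
end
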